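/- arXiv:2603.03894 — 2 statements merged into one kernel-verified Lean document; each statement's English description precedes it below -/
import Mathlib

section
/- Let G=(V,E) be a finite simple graph without isolated vertices. For every tube t of G, the point z_t = h_t/|h_t|_1 is a vertex (extreme point) of the dual cosmological polytope C_G° = conv{ z_s : s ∈ Z(G) }. -/
set_option linter.unusedSectionVars false
set_option linter.unusedVariables false

open Finset

variable {V : Type} [Fintype V] [DecidableEq V]

/-- A tube of the graph on vertex type `V` with edge set `E`: a nonempty connected
(not necessarily induced) subgraph, recorded by its vertex set and edge set.
(The field `verts_in` records that all vertices of a tube are vertices of the graph,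
where, the graph having no isolated vertices, its vertex set is the set of endpoints of `E`.) -/
structure Tube (E : Finset (Sym2 V)) where
  verts : Finset V
  edges : Finset (Sym2 V)
  nonempty : verts.Nonempty
  edges_sub : edges ⊆ E
  verts_in : ∀ v ∈ verts, ∃ e ∈ E, v ∈ e
  endpoints_mem : ∀ e ∈ edges, ∀ v ∈ e, v ∈ verts
  conn : ∀ u ∈ verts, ∀ w ∈ verts,
    Relation.ReflTransGen (fun a b => s(a, b) ∈ edges) u w

theorem Tube.ext' {E : Finset (Sym2 V)} {a b : Tube E}
    (h1 : a.verts = b.verts) (h2 : a.edges = b.edges) : a = b := by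
  cases a; cases b; subst h1; subst h2; rfl

instance {E : Finset (Sym2 V)} : DecidableEq (Tube E) := fun a b =>
  decidable_of_iff (a.verts = b.verts ∧ a.edges = b.edges)
    ⟨fun h => Tube.ext' h.1 h.2, fun h => by subst h; exact ⟨rfl, rfl⟩⟩

noncomputable instance {E : Finset (Sym2 V)} : Fintype (Tube E) :=
  Fintype.ofInjective (fun t => (t.verts, t.edges))
    (fun a b h => Tube.ext' (congrArg Prod.fst h) (congrArg Prod.snd h))

/-- The coordinates of the ambient space `ℝ^(V ⊔ E)`. -/
abbrev Coord (E : Finset (Sym2 V)) := V ⊕ {e : Sym2 V // e ∈ E}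

/-- The standard inner product on `ℝ^(V ⊔ E)`. -/
def dot {E : Finset (Sym2 V)} (x y : Coord E → ℝ) : ℝ := ∑ i, x i * y i

/-- The facet normal `h_t = Σ_{v ∈ V(t)} x_v + Σ_{e ∈ E∖E(t)} |e ∩ V(t)|·y_e`. -/
def hvec {E : Finset (Sym2 V)} (t : Tube E) : Coord E → ℝ := fun i =>
  match i with
  | Sum.inl v => if v ∈ t.verts then 1 else 0
  | Sum.inr e => if e.1 ∈ t.edges then 0
      else ((t.verts.filter (fun v => v ∈ e.1)).card : ℝ)

/-- `|h_t|₁`, the sum of the coordinates of `h_t`. -/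
def ell {E : Finset (Sym2 V)} (t : Tube E) : ℝ := ∑ i, hvec t i

/-- `z_t = h_t / |h_t|₁`. -/
noncomputable def zvec {E : Finset (Sym2 V)} (t : Tube E) : Coord E → ℝ := (ell t)⁻¹ • hvec t

/-- The vertices `p_e, p_{e,v}, p_{e,w}` of the cosmological polytope (note that
`p_{e,w}` is obtained from `p_{e,v}` by exchanging the roles of `v` and `w`). -/
def cosmoVerts (E : Finset (Sym2 V)) : Set (Coord E → ℝ) :=
  {q | ∃ (v w : V) (he : s(v, w) ∈ E),
      q = Pi.single (Sum.inl v) 1 + Pi.single (Sum.inl w) 1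
            - Pi.single (Sum.inr ⟨s(v, w), he⟩) 1 ∨
      q = Pi.single (Sum.inl v) 1 - Pi.single (Sum.inl w) 1
            + Pi.single (Sum.inr ⟨s(v, w), he⟩) 1}

/-- The cosmological polytope `C_G`. -/
def cosmo (E : Finset (Sym2 V)) : Set (Coord E → ℝ) := convexHull ℝ (cosmoVerts E)

/-- The dual cosmological polytope `C_G° = conv{ z_t : t a tube }`. -/
def dualCosmo (E : Finset (Sym2 V)) : Set (Coord E → ℝ) :=
  convexHull ℝ {z | ∃ t : Tube E, z = zvec t}

/-- The affine hyperplane `H` of points whose coordinates sum to `1`. -/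
def hyperplaneH (E : Finset (Sym2 V)) : Set (Coord E → ℝ) := {z | ∑ i, z i = 1}

/-- A tubing: a set of tubes, pairwise disjoint or nested. -/
def IsTubing (E : Finset (Sym2 V)) (T : Finset (Tube E)) : Prop :=
  ∀ t₁ ∈ T, ∀ t₂ ∈ T,
    Disjoint t₁.verts t₂.verts ∨ t₁.edges ⊆ t₂.edges ∨ t₂.edges ⊆ t₁.edges

/-- A maximal tubing: a tubing maximal under inclusion. -/
def IsMaxTubing (E : Finset (Sym2 V)) (T : Finset (Tube E)) : Prop :=
  IsTubing E T ∧ ∀ T' : Finset (Tube E), IsTubing E T' → T ⊆ T' → T' = T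

/-- `F` is a face of the polytope `P`: `P` itself, `∅`, or the intersection of `P`
with a supporting hyperplane. -/
def IsFace {E : Finset (Sym2 V)} (F P : Set (Coord E → ℝ)) : Prop :=
  F = P ∨ F = ∅ ∨
    ∃ (a : Coord E → ℝ) (c : ℝ), (∀ x ∈ P, c ≤ dot a x) ∧ F = {x | x ∈ P ∧ dot a x = c}

/-! The functional `x ↦ ⟨a_t, x⟩` given by `separatingVec t` exposes `z_t`: for every tube `s`,
`⟨a_t, h_s⟩` is twice a sum over the edges `e` of a nonnegative integer `edgeCost t s e`, which
is identically zero exactly when `s = t`. Indeed, zero cost forces `E(s) ⊆ E(t)` and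
`V(s) ⊆ V(t)`, no edge of `E(t) ∖ E(s)` touches `V(s)`, and then connectivity of `t` gives
`V(t) ⊆ V(s)` and `E(t) ⊆ E(s)`. A point of a convex hull that is the strict minimiser of a
linear functional over the generators is an extreme point. -/

section Convexity

variable {𝕜 E : Type*} [Field 𝕜] [LinearOrder 𝕜] [IsStrictOrderedRing 𝕜]
  [AddCommGroup E] [Module 𝕜 E]

lemma openSegment_subset_setOf_lt {f : E →ₗ[𝕜] 𝕜} {p x y : E}
    (hx : x ∈ insert p {z | f p < f z}) (hy : y ∈ insert p {z | f p < f z})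
    (hxy : x ≠ p ∨ y ≠ p) : openSegment 𝕜 x y ⊆ {z | f p < f z} := by
  have hfx : f p ≤ f x := by rcases hx with rfl | h; exacts [le_rfl, h.le]
  have hfy : f p ≤ f y := by rcases hy with rfl | h; exacts [le_rfl, h.le]
  have hstrict : f p < f x ∨ f p < f y :=
    hxy.imp (fun h => hx.resolve_left h) (fun h => hy.resolve_left h)
  rintro _ ⟨a, b, ha, hb, hab, rfl⟩
  show f p < f (a • x + b • y)
  rw [map_add, map_smul, map_smul, smul_eq_mul, smul_eq_mul]
  calc f p = a * f p + b * f p := by rw [← add_mul, hab, one_mul]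
    _ < a * f x + b * f y := by
      rcases hstrict with h | h
      · exact add_lt_add_of_lt_of_le (mul_lt_mul_of_pos_left h ha)
          (mul_le_mul_of_nonneg_left hfy hb.le)
      · exact add_lt_add_of_le_of_lt (mul_le_mul_of_nonneg_left hfx ha.le)
          (mul_lt_mul_of_pos_left h hb)

lemma convex_insert_setOf_lt (f : E →ₗ[𝕜] 𝕜) (p : E) :
    Convex 𝕜 (insert p {z | f p < f z}) := by
  refine convex_iff_openSegment_subset.2 fun x hx y hy => ?_
  by_cases hxy : x = p ∧ y = p
  · rw [hxy.1, hxy.2, openSegment_same]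
    exact Set.singleton_subset_iff.2 (Set.mem_insert p _)
  · exact (openSegment_subset_setOf_lt hx hy (not_and_or.1 hxy)).trans
      (Set.subset_insert p _)

lemma mem_extremePoints_convexHull_of_forall_lt {S : Set E} {p : E} (hp : p ∈ S)
    (f : E →ₗ[𝕜] 𝕜) (hf : ∀ q ∈ S, q ≠ p → f p < f q) :
    p ∈ (convexHull 𝕜 S).extremePoints 𝕜 := by
  have hsub : convexHull 𝕜 S ⊆ insert p {z | f p < f z} :=
    convexHull_min (fun q hq => (eq_or_ne q p).imp id (hf q hq))
      (convex_insert_setOf_lt f p)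
  refine ⟨subset_convexHull 𝕜 S hp, fun x₁ hx₁ x₂ hx₂ hp₁₂ => ?_⟩
  by_contra hne
  exact lt_irrefl _ (openSegment_subset_setOf_lt (hsub hx₁) (hsub hx₂) (Or.inl hne) hp₁₂)

end Convexity

section Sym2Pair

variable {α : Type*} [DecidableEq α]

lemma sum_filter_mem_pair {M : Type*} [AddCommMonoid M] (A : Finset α) {v w : α} (hvw : v ≠ w)
    (g : α → M) :
    ∑ u ∈ A.filter (· ∈ s(v, w)), g u
      = (if v ∈ A then g v else 0) + (if w ∈ A then g w else 0) := by
  have hsplit : A.filter (· ∈ s(v, w)) = A.filter (· = v) ∪ A.filter (· = w) := by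
    rw [← Finset.filter_or]; simp [Sym2.mem_iff]
  rw [hsplit, Finset.sum_union, Finset.filter_eq', Finset.filter_eq']
  · split_ifs <;> simp
  · exact Finset.disjoint_filter.2 fun u _ huv huw => hvw (huv.symm.trans huw)

lemma card_filter_mem_pair (A : Finset α) {v w : α} (hvw : v ≠ w) :
    (#(A.filter (· ∈ s(v, w))) : ℝ) = (if v ∈ A then 1 else 0) + (if w ∈ A then 1 else 0) := by
  rw [Finset.card_eq_sum_ones, Nat.cast_sum, sum_filter_mem_pair A hvw]
  simp

end Sym2Pair

namespace Tube

variable {E : Finset (Sym2 V)}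

lemma verts_subset_of_forall_adj (t : Tube E) {A : Finset V} {v₀ : V} (hv₀ : v₀ ∈ t.verts)
    (hv₀A : v₀ ∈ A) (hA : ∀ b c, s(b, c) ∈ t.edges → b ∈ A → c ∈ A) : t.verts ⊆ A := by
  intro u hu
  have hpath := t.conn v₀ hv₀ u hu
  clear hu
  induction hpath with
  | refl => exact hv₀A
  | tail _ hbc ih => exact hA _ _ hbc ih

end Tube

section SeparatingFunctional

variable {E : Finset (Sym2 V)}

def incidenceWeight (t : Tube E) (e : Sym2 V) (u : V) : ℝ :=
  if e ∈ t.edges then 0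
  else #(t.verts.filter (· ∈ e)) + 1 - 2 * (if u ∈ t.verts then 1 else 0)

def edgeWeight (t : Tube E) (e : Sym2 V) : ℝ :=
  if e ∈ t.edges then 2 else 1 - #(t.verts.filter (· ∈ e))

def separatingVec (t : Tube E) : Coord E → ℝ
  | .inl u => ∑ e ∈ E, if u ∈ e then incidenceWeight t e u else 0
  | .inr e => edgeWeight t e

def edgeCost (t s : Tube E) (e : Sym2 V) : ℕ :=
  if e ∈ s.edges then (if e ∈ t.edges then 0 else 1)
  else if e ∈ t.edges then #(s.verts.filter (· ∈ e))
  else #((s.verts \ t.verts).filter (· ∈ e))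

lemma dot_separatingVec_hvec_eq_sum (t s : Tube E) :
    dot (separatingVec t) (hvec s) = ∑ e ∈ E,
      (∑ u ∈ s.verts.filter (· ∈ e), incidenceWeight t e u
        + (if e ∈ s.edges then 0 else (#(s.verts.filter (· ∈ e)) : ℝ)) * edgeWeight t e) := by
  rw [Finset.sum_add_distrib, dot, Fintype.sum_sum_type]
  congr 1
  · simp only [separatingVec, hvec, mul_ite, mul_one, mul_zero, Finset.sum_ite_mem,
      Finset.univ_inter]
    rw [Finset.sum_comm]
    simp only [Finset.sum_filter]
  · rw [← Finset.sum_coe_sort E]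
    exact Finset.sum_congr rfl fun e _ => mul_comm _ _

lemma sum_incidenceWeight_add_edgeWeight_eq (t s : Tube E) {e : Sym2 V} (he : ¬ e.IsDiag) :
    ∑ u ∈ s.verts.filter (· ∈ e), incidenceWeight t e u
      + (if e ∈ s.edges then 0 else (#(s.verts.filter (· ∈ e)) : ℝ)) * edgeWeight t e
      = 2 * edgeCost t s e := by
  induction e using Sym2.ind with
  | _ v w =>
  have hvw : v ≠ w := fun h => he (Sym2.mk_isDiag_iff.2 h)
  have hs := s.endpoints_mem s(v, w)
  have ht := t.endpoints_mem s(v, w)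
  simp only [Sym2.mem_iff, forall_eq_or_imp, forall_eq] at hs ht
  unfold incidenceWeight edgeWeight edgeCost
  simp only [sum_filter_mem_pair _ hvw, Nat.cast_ite, Nat.cast_zero, Nat.cast_one,
    card_filter_mem_pair _ hvw, Finset.mem_sdiff]
  split_ifs <;> simp_all <;> norm_num

lemma dot_separatingVec_hvec (hE : ∀ e ∈ E, ¬ e.IsDiag) (t s : Tube E) :
    dot (separatingVec t) (hvec s) = 2 * ∑ e ∈ E, (edgeCost t s e : ℝ) := by
  rw [dot_separatingVec_hvec_eq_sum, Finset.mul_sum]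
  exact Finset.sum_congr rfl fun e he => sum_incidenceWeight_add_edgeWeight_eq t s (hE e he)

lemma edgeCost_self (t : Tube E) (e : Sym2 V) : edgeCost t t e = 0 := by
  unfold edgeCost
  split_ifs <;> simp

lemma eq_of_forall_edgeCost_eq_zero {t s : Tube E} (h : ∀ e ∈ E, edgeCost t s e = 0) :
    s = t := by
  have hcost : ∀ e ∈ E, e ∉ s.edges → ∀ u ∈ e, u ∈ s.verts → u ∈ t.verts ∧ e ∉ t.edges := by
    intro e he hes u hue hus
    have := h e he
    simp only [edgeCost, if_neg hes] at this
    split_ifs at this with het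
    · exact absurd this (Finset.card_ne_zero.2 ⟨u, Finset.mem_filter.2 ⟨hus, hue⟩⟩)
    · refine ⟨by_contra fun hut => ?_, het⟩
      exact absurd this (Finset.card_ne_zero.2 ⟨u, by simp [hus, hut, hue]⟩)
  have hedges_sub : s.edges ⊆ t.edges := fun e hes => by
    have := h e (s.edges_sub hes)
    simp only [edgeCost, if_pos hes] at this
    split_ifs at this with het
    exact het
  have hverts_sub : s.verts ⊆ t.verts := fun v hv => by
    obtain ⟨e, he, hve⟩ := s.verts_in v hv
    by_cases hes : e ∈ s.edges
    · exact t.endpoints_mem e (hedges_sub hes) v hve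
    · exact (hcost e he hes v hve hv).1
  obtain ⟨v₀, hv₀⟩ := s.nonempty
  have hverts_sup : t.verts ⊆ s.verts := t.verts_subset_of_forall_adj (hverts_sub hv₀) hv₀
    fun b c hbc hb => by
      by_cases hbcs : s(b, c) ∈ s.edges
      · exact s.endpoints_mem _ hbcs c (Sym2.mem_mk_right b c)
      · exact absurd hbc (hcost _ (t.edges_sub hbc) hbcs b (Sym2.mem_mk_left b c) hb).2
  have hedges_sup : t.edges ⊆ s.edges := fun e het => by
    by_contra hes
    obtain ⟨u, hue⟩ : ∃ u, u ∈ e := ⟨e.out.1, Sym2.out_fst_mem e⟩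
    exact (hcost e (t.edges_sub het) hes u hue (hverts_sup (t.endpoints_mem e het u hue))).2 het
  exact Tube.ext' (hverts_sub.antisymm hverts_sup) (hedges_sub.antisymm hedges_sup)

lemma hvec_nonneg (s : Tube E) (i : Coord E) : 0 ≤ hvec s i := by
  rcases i with u | e <;> simp only [hvec] <;> split_ifs <;> positivity

lemma ell_pos (s : Tube E) : 0 < ell s := by
  obtain ⟨v, hv⟩ := s.nonempty
  refine Finset.sum_pos' (fun i _ => hvec_nonneg s i) ⟨.inl v, Finset.mem_univ _, ?_⟩
  simp [hvec, hv]

lemma dot_zvec (a : Coord E → ℝ) (s : Tube E) : dot a (zvec s) = (ell s)⁻¹ * dot a (hvec s) :=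
  dotProduct_smul _ _ _

lemma dot_separatingVec_zvec_self (hE : ∀ e ∈ E, ¬ e.IsDiag) (t : Tube E) :
    dot (separatingVec t) (zvec t) = 0 := by
  simp [dot_zvec, dot_separatingVec_hvec hE, edgeCost_self]

lemma dot_separatingVec_zvec_pos (hE : ∀ e ∈ E, ¬ e.IsDiag) {t s : Tube E} (hst : s ≠ t) :
    0 < dot (separatingVec t) (zvec s) := by
  have hcost : 0 < ∑ e ∈ E, edgeCost t s e :=
    Nat.pos_of_ne_zero fun h => hst (eq_of_forall_edgeCost_eq_zero (Finset.sum_eq_zero_iff.1 h))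
  rw [dot_zvec, dot_separatingVec_hvec hE, ← Nat.cast_sum]
  have := ell_pos s
  positivity

end SeparatingFunctional

theorem statement1_general (E : Finset (Sym2 V)) (hE : ∀ e ∈ E, ¬ e.IsDiag)
    (t : Tube E) :
    zvec t ∈ Set.extremePoints ℝ (dualCosmo E) := by
  refine mem_extremePoints_convexHull_of_forall_lt ⟨t, rfl⟩
    (dotProductBilin ℝ ℝ (separatingVec t)) ?_
  rintro _ ⟨s, rfl⟩ hst
  show dot (separatingVec t) (zvec t) < dot (separatingVec t) (zvec s)
  rw [dot_separatingVec_zvec_self hE]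
  exact dot_separatingVec_zvec_pos hE fun h => hst (h ▸ rfl)

/-- For every tube `t` of a finite simple graph `G = (V, E)` without
isolated vertices, the point `z_t = h_t/|h_t|₁` is a vertex (extreme point) of the dual
cosmological polytope `C_G° = conv{ z_s : s ∈ Z(G) }`. -/
theorem statement1 (E : Finset (Sym2 V)) (hE : ∀ e ∈ E, ¬ e.IsDiag)
    (hiso : ∀ v : V, ∃ e ∈ E, v ∈ e) (t : Tube E) :
    zvec t ∈ Set.extremePoints ℝ (dualCosmo E) :=
  statement1_general E hE t
end

section
/- Let C₁, C₂ ⊆ R^(d+1) be closed convex cones that are full-dimensional, pointed, and dual to each other, i.e. C₂ = { x : ⟨x, y⟩ ≥ 0 for all y ∈ C₁ }. Let u ∈ R^(d+1) with ‖u‖ = 1 and ⟨u, x⟩ > 0 for every nonzero x ∈ C₁ ∪ C₂, let H = { x : ⟨u, x⟩ = 1 }, set P₁ = C₁ ∩ H and P₂ = C₂ ∩ H, and let π be the orthogonal projection onto the linear hyperplane u^⊥. Then π(P₁) and π(P₂) are polar dual polytopes in u^⊥; that is, π(P₂) = { w ∈ u^⊥ : ⟨w, w'⟩ ≥ −1 for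 all w' ∈ π(P₁) } and symmetrically π(P₁) = { w ∈ u^⊥ : ⟨w, w'⟩ ≥ −1 for all w' ∈ π(P₂) }. -/
open RealInnerProductSpace

/-!
Write `π x = x - ⟪u, x⟫ • u` and `H = {x | ⟪u, x⟫ = 1}`. For `x, y ∈ H` one has
`⟪π x, π y⟫ = ⟪x, y⟫ - 1`, so `⟪x, y⟫ ≥ 0` is exactly `⟪π x, π y⟫ ≥ -1`. Conversely, `π` restricts
to a bijection `H → u^⊥` with inverse `w ↦ w + u`, and since `u` is positive on the cone `A`, every
nonzero `y ∈ A` is a positive multiple of a point of `A ∩ H`. Hence the projected slice of the dual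
cone of `A` is the polar of the projected slice of `A`. Applying this to `C₁` and, by the bipolar
theorem for closed convex cones, to `C₂` gives both equalities.
-/

section Slice

variable {E : Type*} [NormedAddCommGroup E] [InnerProductSpace ℝ E] {u : E}

lemma inner_sub_inner_smul_self (hu : ‖u‖ = 1) (x : E) : ⟪u, x - ⟪u, x⟫ • u⟫ = 0 := by
  rw [inner_sub_right, real_inner_smul_right, real_inner_self_eq_norm_sq, hu]
  ring

lemma inner_sub_inner_smul_sub_inner_smul (hu : ‖u‖ = 1) (x y : E) :
    ⟪x - ⟪u, x⟫ • u, y - ⟪u, y⟫ • u⟫ = ⟪x, y⟫ - ⟪u, x⟫ * ⟪u, y⟫ := by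
  rw [inner_sub_left, inner_sub_right, inner_sub_right, real_inner_smul_left,
    real_inner_smul_left, real_inner_smul_right, real_inner_smul_right,
    real_inner_self_eq_norm_sq, hu, real_inner_comm x u]
  ring

lemma inner_sub_inner_smul_of_inner_eq_zero {w : E} (hw : ⟪u, w⟫ = 0) (y : E) :
    ⟪w, y - ⟪u, y⟫ • u⟫ = ⟪w, y⟫ := by
  rw [inner_sub_right, real_inner_smul_right, real_inner_comm u w, hw, mul_zero, sub_zero]

lemma exists_pos_smul_eq_of_mem {A : Set E} (hA : ∀ c : ℝ, 0 ≤ c → ∀ x ∈ A, c • x ∈ A)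
    (hpos : ∀ x ∈ A, x ≠ 0 → 0 < ⟪u, x⟫) {y : E} (hy : y ∈ A) (hy0 : y ≠ 0) :
    ∃ t : ℝ, 0 < t ∧ ∃ y' ∈ A ∩ {x | ⟪u, x⟫ = 1}, y = t • y' := by
  have ht := hpos y hy hy0
  refine ⟨⟪u, y⟫, ht, ⟪u, y⟫⁻¹ • y, ⟨hA _ (inv_nonneg.2 ht.le) y hy, ?_⟩, ?_⟩
  · rw [Set.mem_ofPred_eq, real_inner_smul_right, inv_mul_cancel₀ ht.ne']
  · rw [smul_smul, mul_inv_cancel₀ ht.ne', one_smul]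

theorem image_dual_slice_eq_polar {A B : Set E} (hA : ∀ c : ℝ, 0 ≤ c → ∀ x ∈ A, c • x ∈ A)
    (hB : B = {x | ∀ y ∈ A, 0 ≤ ⟪x, y⟫}) (hu : ‖u‖ = 1)
    (hpos : ∀ x ∈ A, x ≠ 0 → 0 < ⟪u, x⟫) :
    (fun x => x - ⟪u, x⟫ • u) '' (B ∩ {x | ⟪u, x⟫ = 1}) =
      {w | ⟪u, w⟫ = 0 ∧
        ∀ w' ∈ (fun x => x - ⟪u, x⟫ • u) '' (A ∩ {x | ⟪u, x⟫ = 1}), -1 ≤ ⟪w, w'⟫} := by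
  subst hB
  ext w
  constructor
  · rintro ⟨x, ⟨hxB, hx1 : ⟪u, x⟫ = 1⟩, rfl⟩
    refine ⟨inner_sub_inner_smul_self hu x, ?_⟩
    rintro _ ⟨y, ⟨hyA, hy1 : ⟪u, y⟫ = 1⟩, rfl⟩
    rw [inner_sub_inner_smul_sub_inner_smul hu, hx1, hy1]
    linarith [hxB y hyA]
  · rintro ⟨hw0, hw⟩
    have hwu : ⟪u, w + u⟫ = 1 := by
      rw [inner_add_right, hw0, real_inner_self_eq_norm_sq, hu]
      norm_num
    refine ⟨w + u, ⟨fun y hy => ?_, hwu⟩, by simp only [hwu, one_smul, add_sub_cancel_right]⟩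
    rcases eq_or_ne y 0 with rfl | hy0
    · rw [inner_zero_right]
    obtain ⟨t, ht, y', ⟨hy'A, hy'1 : ⟪u, y'⟫ = 1⟩, rfl⟩ := exists_pos_smul_eq_of_mem hA hpos hy hy0
    have hwy' := hw _ ⟨y', ⟨hy'A, hy'1⟩, rfl⟩
    rw [inner_sub_inner_smul_of_inner_eq_zero hw0] at hwy'
    rw [real_inner_smul_right, inner_add_left, hy'1]
    exact mul_nonneg ht.le (by linarith)

end Slice

lemma Convex.add_mem_of_smul_mem {E : Type*} [AddCommGroup E] [Module ℝ E] {C : Set E}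
    (hconvex : Convex ℝ C) (hcone : ∀ c : ℝ, 0 ≤ c → ∀ x ∈ C, c • x ∈ C) {x y : E}
    (hx : x ∈ C) (hy : y ∈ C) : x + y ∈ C := by
  have hmid := hconvex hx hy (by norm_num : (0 : ℝ) ≤ 1 / 2) (by norm_num : (0 : ℝ) ≤ 1 / 2)
    (by norm_num)
  simpa [smul_add, smul_smul] using hcone 2 (by norm_num) _ hmid

section Bipolar

variable {E : Type*} [NormedAddCommGroup E] [InnerProductSpace ℝ E] [CompleteSpace E]

lemma setOf_inner_nonneg_eq_coe_innerDual (A : Set E) :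
    {x | ∀ y ∈ A, 0 ≤ ⟪x, y⟫} = (ProperCone.innerDual A : Set E) := by
  ext x
  simp [real_inner_comm x]

theorem IsClosed.setOf_inner_nonneg_dual_eq {C : Set E} (hclosed : IsClosed C)
    (hconvex : Convex ℝ C) (hcone : ∀ c : ℝ, 0 ≤ c → ∀ x ∈ C, c • x ∈ C) (h0 : (0 : E) ∈ C) :
    {x | ∀ y ∈ {z | ∀ y ∈ C, 0 ≤ ⟪z, y⟫}, 0 ≤ ⟪x, y⟫} = C := by
  let K : ProperCone ℝ E :=
    { carrier := C
      add_mem' := hconvex.add_mem_of_smul_mem hcone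
      zero_mem' := h0
      smul_mem' := fun c x hx => hcone c c.2 x hx
      isClosed' := hclosed }
  rw [setOf_inner_nonneg_eq_coe_innerDual, setOf_inner_nonneg_eq_coe_innerDual]
  exact congrArg SetLike.coe K.innerDual_innerDual

end Bipolar

theorem statement3_general (d : ℕ) (C₁ C₂ : Set (EuclideanSpace ℝ (Fin (d + 1))))
    (h₁closed : IsClosed C₁) (h₁convex : Convex ℝ C₁)
    (h₁cone : ∀ c : ℝ, 0 ≤ c → ∀ x ∈ C₁, c • x ∈ C₁)
    (h₁pointed : C₁ ∩ (-C₁) = {0})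
    (h₂cone : ∀ c : ℝ, 0 ≤ c → ∀ x ∈ C₂, c • x ∈ C₂)
    (hdual : C₂ = {x | ∀ y ∈ C₁, 0 ≤ ⟪x, y⟫})
    (u : EuclideanSpace ℝ (Fin (d + 1))) (hu : ‖u‖ = 1)
    (hupos : ∀ x ∈ C₁ ∪ C₂, x ≠ 0 → 0 < ⟪u, x⟫) :
    ((fun x => x - ⟪u, x⟫ • u) '' (C₂ ∩ {x | ⟪u, x⟫ = 1})) =
        {w | ⟪u, w⟫ = 0 ∧
          ∀ w' ∈ (fun x => x - ⟪u, x⟫ • u) '' (C₁ ∩ {x | ⟪u, x⟫ = 1}), -1 ≤ ⟪w, w'⟫} ∧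
    ((fun x => x - ⟪u, x⟫ • u) '' (C₁ ∩ {x | ⟪u, x⟫ = 1})) =
        {w | ⟪u, w⟫ = 0 ∧
          ∀ w' ∈ (fun x => x - ⟪u, x⟫ • u) '' (C₂ ∩ {x | ⟪u, x⟫ = 1}), -1 ≤ ⟪w, w'⟫} := by
  have h0 : (0 : EuclideanSpace ℝ (Fin (d + 1))) ∈ C₁ := (h₁pointed.ge rfl).1
  have hdual' : C₁ = {x | ∀ y ∈ C₂, 0 ≤ ⟪x, y⟫} := by
    rw [hdual, h₁closed.setOf_inner_nonneg_dual_eq h₁convex h₁cone h0]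
  exact ⟨image_dual_slice_eq_polar h₁cone hdual hu fun x hx => hupos x (.inl hx),
    image_dual_slice_eq_polar h₂cone hdual' hu fun x hx => hupos x (.inr hx)⟩

/-- Let `C₁, C₂ ⊆ ℝ^(d+1)` be closed convex cones, full-dimensional,
pointed, and dual to each other. Let `u` be a unit vector with `⟨u, x⟩ > 0` for every
nonzero `x ∈ C₁ ∪ C₂`, let `H = {x : ⟨u, x⟩ = 1}`, `P₁ = C₁ ∩ H`, `P₂ = C₂ ∩ H`, and let
`π x = x - ⟨u, x⟩ • u` be the orthogonal projection onto `u^⊥`. Then `π(P₁)` and `π(P₂)`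
are polar dual to each other in `u^⊥`. -/
theorem statement3 (d : ℕ) (C₁ C₂ : Set (EuclideanSpace ℝ (Fin (d + 1))))
    (h₁closed : IsClosed C₁) (h₁convex : Convex ℝ C₁)
    (h₁cone : ∀ c : ℝ, 0 ≤ c → ∀ x ∈ C₁, c • x ∈ C₁)
    (h₁full : (interior C₁).Nonempty) (h₁pointed : C₁ ∩ (-C₁) = {0})
    (h₂closed : IsClosed C₂) (h₂convex : Convex ℝ C₂)
    (h₂cone : ∀ c : ℝ, 0 ≤ c → ∀ x ∈ C₂, c • x ∈ C₂)
    (h₂full : (interior C₂).Nonempty) (h₂pointed : C₂ ∩ (-C₂) = {0})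
    (hdual : C₂ = {x | ∀ y ∈ C₁, 0 ≤ ⟪x, y⟫})
    (u : EuclideanSpace ℝ (Fin (d + 1))) (hu : ‖u‖ = 1)
    (hupos : ∀ x ∈ C₁ ∪ C₂, x ≠ 0 → 0 < ⟪u, x⟫) :
    ((fun x => x - ⟪u, x⟫ • u) '' (C₂ ∩ {x | ⟪u, x⟫ = 1})) =
        {w | ⟪u, w⟫ = 0 ∧
          ∀ w' ∈ (fun x => x - ⟪u, x⟫ • u) '' (C₁ ∩ {x | ⟪u, x⟫ = 1}), -1 ≤ ⟪w, w'⟫} ∧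
    ((fun x => x - ⟪u, x⟫ • u) '' (C₁ ∩ {x | ⟪u, x⟫ = 1})) =
        {w | ⟪u, w⟫ = 0 ∧
          ∀ w' ∈ (fun x => x - ⟪u, x⟫ • u) '' (C₂ ∩ {x | ⟪u, x⟫ = 1}), -1 ≤ ⟪w, w'⟫} :=
  statement3_general d C₁ C₂ h₁closed h₁convex h₁cone h₁pointed h₂cone hdual u hu hupos
end
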